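/- arXiv:2312.03384 — 5 statements merged into one kernel-verified Lean document; each statement's English description precedes it below -/
import Mathlib

section
/- Key Lemma: Let G be a finite simple graph with maximum degree at most 3 such that 20·γ(G) ≥ w_G(V(G)). Let S be a nonempty subset of V(G) such that 20·γ(G − S) < w_{G−S}(V(G)∖S). Then 20·γ(G[S]) > w_G(S) − c_G(S). -/
open Finset

/-- The domination number: minimum size of a dominating set. -/
noncomputable def gamma {V : Type*} [Fintype V] (G : SimpleGraph V) : ℕ :=
  sInf {n | ∃ D : Finset V, D.card = n ∧ ∀ v : V, v ∈ D ∨ ∃ u ∈ D, G.Adj u v}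

/-- The degree of a vertex. -/
noncomputable def gdeg {V : Type*} (G : SimpleGraph V) (v : V) : ℕ :=
  Nat.card (G.neighborSet v)

/-- Weight of a vertex of degree `d` (for graphs of maximum degree at most 3). -/
def wt (d : ℕ) : ℕ :=
  if d = 0 then 20 else if d = 1 then 15 else if d = 2 then 11 else 7

/-- Total weight of a graph: `w(G) = Σ_v w_G(v)`. -/
noncomputable def wsum {V : Type*} [Fintype V] (G : SimpleGraph V) : ℕ :=
  ∑ v : V, wt (gdeg G v)

/-- The cost `c_G(S) = w_{G-S}(V∖S) - w_G(V∖S)`. -/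
noncomputable def cost {V : Type*} [Fintype V] [DecidableEq V]
    (G : SimpleGraph V) (S : Finset V) : ℤ :=
  (wsum (G.induce (↑(Sᶜ) : Set V)) : ℤ) - ∑ v ∈ Sᶜ, (wt (gdeg G v) : ℤ)

lemma gamma_exists {V : Type*} [Fintype V] [DecidableEq V] (G : SimpleGraph V) :
    ∃ D : Finset V, D.card = gamma G ∧ ∀ v : V, v ∈ D ∨ ∃ u ∈ D, G.Adj u v := by
  have hne : {n | ∃ D : Finset V, D.card = n ∧ ∀ v : V, v ∈ D ∨ ∃ u ∈ D, G.Adj u v}.Nonempty :=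
    ⟨Finset.univ.card, Finset.univ, rfl, fun v => Or.inl (mem_univ v)⟩
  obtain ⟨D, hc, hd⟩ := Nat.sInf_mem hne
  exact ⟨D, hc, hd⟩

lemma gamma_le {V : Type*} [Fintype V] (G : SimpleGraph V) {D : Finset V}
    (h : ∀ v : V, v ∈ D ∨ ∃ u ∈ D, G.Adj u v) : gamma G ≤ D.card :=
  Nat.sInf_le ⟨D, rfl, h⟩

lemma gamma_subadd {V : Type*} [Fintype V] [DecidableEq V] (G : SimpleGraph V) (S : Finset V) :
    gamma G ≤ gamma (G.induce (↑S : Set V)) + gamma (G.induce (↑(Sᶜ) : Set V)) := by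
  obtain ⟨D1, hc1, hd1⟩ := gamma_exists (G.induce (↑S : Set V))
  obtain ⟨D2, hc2, hd2⟩ := gamma_exists (G.induce (↑(Sᶜ) : Set V))
  set D : Finset V := D1.image Subtype.val ∪ D2.image Subtype.val with hD
  have hdom : ∀ v : V, v ∈ D ∨ ∃ u ∈ D, G.Adj u v := by
    intro v
    by_cases hv : v ∈ S
    · rcases hd1 ⟨v, by simpa using hv⟩ with h | ⟨u, hu, hadj⟩
      · exact Or.inl (mem_union_left _ (mem_image_of_mem _ h))
      · exact Or.inr ⟨u.val, mem_union_left _ (mem_image_of_mem _ hu), hadj⟩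
    · have hv' : v ∈ Sᶜ := by simpa using hv
      rcases hd2 ⟨v, by simpa using hv'⟩ with h | ⟨u, hu, hadj⟩
      · exact Or.inl (mem_union_right _ (mem_image_of_mem _ h))
      · exact Or.inr ⟨u.val, mem_union_right _ (mem_image_of_mem _ hu), hadj⟩
  calc gamma G ≤ D.card := gamma_le G hdom
    _ ≤ (D1.image Subtype.val).card + (D2.image Subtype.val).card := card_union_le _ _
    _ ≤ D1.card + D2.card := Nat.add_le_add (card_image_le) (card_image_le)
    _ = _ := by rw [hc1, hc2]

theorem key_lemma {V : Type*} [Fintype V] [DecidableEq V] (G : SimpleGraph V)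
    (hdeg : ∀ v : V, gdeg G v ≤ 3)
    (hG : wsum G ≤ 20 * gamma G)
    (S : Finset V) (hS : S.Nonempty)
    (hrem : 20 * gamma (G.induce (↑(Sᶜ) : Set V)) < wsum (G.induce (↑(Sᶜ) : Set V))) :
    (∑ v ∈ S, (wt (gdeg G v) : ℤ)) - cost G S < 20 * gamma (G.induce (↑S : Set V)) := by
  have hsub := gamma_subadd G S
  have hsplit : (∑ v ∈ S, (wt (gdeg G v) : ℤ)) + ∑ v ∈ Sᶜ, (wt (gdeg G v) : ℤ)
      = (wsum G : ℤ) := by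
    rw [Finset.sum_add_sum_compl]
    simp [wsum]
  unfold cost
  have h1 : (wsum G : ℤ) ≤ 20 * gamma G := by exact_mod_cast hG
  have h2 : (20 : ℤ) * gamma (G.induce (↑(Sᶜ) : Set V)) < wsum (G.induce (↑(Sᶜ) : Set V)) := by
    exact_mod_cast hrem
  have h3 : (gamma G : ℤ) ≤ gamma (G.induce (↑S : Set V)) + gamma (G.induce (↑(Sᶜ) : Set V)) := by
    exact_mod_cast hsub
  linarith
end

section
/- Let G be a finite simple graph with maximum degree at most 3 and let S be a nonempty subset of V(G) such that there are exactly k edges of G with one endpoint in S and the other in V(G) ∖ S. If every vertex in N_G(S) ∖ S has degree 2 or 3 in G, then c_G(S) ≤ 4k + ⌊k/2⌋. -/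
open Finset

/-!
Deleting `S` only changes the weights of the vertices of `Sᶜ` adjacent to `S`. Such a vertex has
degree 2 or 3, and if it loses `e ≥ 1` of its edges its weight grows by at most `4e + ⌊e/2⌋`
(a finite check on the weight table). Each lost edge is a distinct edge of the cut, so the `e`'s
sum to at most `k`, and `⌊·/2⌋` is superadditive.
-/

lemma Finset.sum_nat_div_le {ι : Type*} (s : Finset ι) (f : ι → ℕ) (n : ℕ) :
    ∑ i ∈ s, f i / n ≤ (∑ i ∈ s, f i) / n := by
  rcases Nat.eq_zero_or_pos n with rfl | hn
  · simp
  rw [Nat.le_div_iff_mul_le hn, sum_mul]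
  exact sum_le_sum fun i _ => Nat.div_mul_le_self (f i) n

lemma wt_le_of_add_eq {e c : ℕ} (h : e + c = 2 ∨ e + c = 3) :
    wt c ≤ wt (e + c) + 4 * e + e / 2 := by
  have he : e ≤ 3 := by omega
  have hc : c ≤ 3 := by omega
  interval_cases e <;> interval_cases c <;> simp_all [wt]

section Graph

variable {V : Type*} [Fintype V] (G : SimpleGraph V) [DecidableRel G.Adj]

lemma gdeg_eq_degree (v : V) : gdeg G v = G.degree v := by
  rw [gdeg, Nat.card_eq_fintype_card, SimpleGraph.card_neighborSet_eq_degree]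

lemma gdeg_eq_card_adj_add [DecidableEq V] (S : Finset V) (v : V) :
    gdeg G v = #{a ∈ S | G.Adj v a} + #{u ∈ Sᶜ | G.Adj v u} := by
  rw [gdeg_eq_degree, SimpleGraph.degree, SimpleGraph.neighborFinset_eq_filter,
    ← card_union_of_disjoint (disjoint_filter_filter disjoint_compl_right),
    ← filter_union, union_compl]

lemma gdeg_induce [DecidableEq V] (s : Finset V) (x : (s : Set V)) :
    gdeg (G.induce (s : Set V)) x = #{u ∈ s | G.Adj x u} := by
  have e : (G.induce (s : Set V)).neighborSet x ≃ {u : V // u ∈ s ∧ G.Adj x u} :=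
    Equiv.subtypeSubtypeEquivSubtypeInter (· ∈ (s : Set V)) (G.Adj x)
  rw [gdeg, Nat.card_congr e, Nat.card_eq_fintype_card, Fintype.card_subtype,
    filter_and, filter_mem_eq_inter, univ_inter, inter_filter, inter_univ]

lemma wsum_induce [DecidableEq V] (s : Finset V) :
    wsum (G.induce (s : Set V)) = ∑ v ∈ s, wt #{u ∈ s | G.Adj v u} := by
  rw [wsum, ← sum_coe_sort s]
  exact sum_congr rfl fun x _ => by rw [gdeg_induce]

lemma cost_eq_sum [DecidableEq V] (S : Finset V) :
    cost G S = ∑ v ∈ Sᶜ, ((wt #{u ∈ Sᶜ | G.Adj v u} : ℤ) - wt (gdeg G v)) := by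
  rw [cost, wsum_induce, sum_sub_distrib, Nat.cast_sum]

lemma sum_card_adj_le_card_cut [DecidableEq V] (S : Finset V) :
    ∑ v ∈ Sᶜ, #{a ∈ S | G.Adj v a} ≤
      Nat.card {e : Sym2 V // e ∈ G.edgeSet ∧ ∃ a b, a ∈ S ∧ b ∉ S ∧ e = s(a, b)} := by
  classical
  rw [Nat.card_eq_fintype_card, Fintype.card_subtype, ← card_sigma]
  refine card_le_card_of_injOn (fun p => s(p.2, p.1)) ?_ ?_
  · intro p hp
    simp only [coe_sigma, Set.mem_sigma_iff, mem_coe, mem_compl,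
      mem_filter] at hp
    simp only [coe_filter, mem_univ, true_and, Set.mem_ofPred_eq]
    exact ⟨hp.2.2.symm, p.2, p.1, hp.2.1, hp.1, rfl⟩
  · rintro ⟨v, a⟩ hp ⟨w, b⟩ hq hpq
    simp only [coe_sigma, Set.mem_sigma_iff, mem_coe, mem_compl,
      mem_filter] at hp hq
    rcases Sym2.eq_iff.mp hpq with ⟨rfl, rfl⟩ | ⟨rfl, rfl⟩
    · rfl
    · exact absurd hp.2.1 hq.1

lemma wt_card_adj_compl_le [DecidableEq V] {S : Finset V} {v : V}
    (hv : (∃ a ∈ S, G.Adj a v) → gdeg G v = 2 ∨ gdeg G v = 3) :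
    wt #{u ∈ Sᶜ | G.Adj v u} ≤
      wt (gdeg G v) + 4 * #{a ∈ S | G.Adj v a} + #{a ∈ S | G.Adj v a} / 2 := by
  rw [gdeg_eq_card_adj_add G S v] at hv ⊢
  rcases Nat.eq_zero_or_pos #{a ∈ S | G.Adj v a} with h0 | hpos
  · simp [h0]
  · obtain ⟨a, ha⟩ := card_pos.mp hpos
    rw [mem_filter] at ha
    exact wt_le_of_add_eq (hv ⟨a, ha.1, ha.2.symm⟩)

end Graph

theorem cost_bound_general {V : Type*} [Fintype V] [DecidableEq V] (G : SimpleGraph V)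
    (S : Finset V) (k : ℕ)
    (hk : Nat.card {e : Sym2 V // e ∈ G.edgeSet ∧ ∃ a b, a ∈ S ∧ b ∉ S ∧ e = s(a, b)} = k)
    (hN : ∀ v : V, v ∉ S → (∃ u ∈ S, G.Adj u v) → gdeg G v = 2 ∨ gdeg G v = 3) :
    cost G S ≤ ((4 * k + k / 2 : ℕ) : ℤ) := by
  classical
  have hcut := hk ▸ sum_card_adj_le_card_cut G S
  rw [cost_eq_sum]
  calc ∑ v ∈ Sᶜ, ((wt #{u ∈ Sᶜ | G.Adj v u} : ℤ) - wt (gdeg G v))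
      ≤ ∑ v ∈ Sᶜ, ((4 * #{a ∈ S | G.Adj v a} + #{a ∈ S | G.Adj v a} / 2 : ℕ) : ℤ) :=
        sum_le_sum fun v hv => by
          have := wt_card_adj_compl_le G (hN v (mem_compl.mp hv))
          omega
    _ ≤ ((4 * k + k / 2 : ℕ) : ℤ) := by
        rw [← Nat.cast_sum, Nat.cast_le, sum_add_distrib, ← mul_sum]
        have := sum_nat_div_le Sᶜ (fun v => #{a ∈ S | G.Adj v a}) 2
        have := Nat.div_le_div_right (c := 2) hcut
        omega

theorem cost_bound {V : Type*} [Fintype V] [DecidableEq V] (G : SimpleGraph V)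
    (hdeg : ∀ v : V, gdeg G v ≤ 3)
    (S : Finset V) (hS : S.Nonempty) (k : ℕ)
    (hk : Nat.card {e : Sym2 V // e ∈ G.edgeSet ∧ ∃ a b, a ∈ S ∧ b ∉ S ∧ e = s(a, b)} = k)
    (hN : ∀ v : V, v ∉ S → (∃ u ∈ S, G.Adj u v) → gdeg G v = 2 ∨ gdeg G v = 3) :
    cost G S ≤ ((4 * k + k / 2 : ℕ) : ℤ) :=
  cost_bound_general G S k hk hN
end

section
/- Let G be a finite simple graph with maximum degree at most 3 and girth at least 8, such that 20·γ(G) ≥ w(G) and every nonempty proper induced subgraph H of G satisfies 20·γ(H) < w(H). Then G contains no sequence (1,2), i.e., there are no adjacent vertices v, u of G with deg_G(v) = 1 and deg_G(u) = 2. -/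
open Finset

theorem no_seq_1_2 {V : Type*} [Fintype V] (G : SimpleGraph V)
    (hdeg : ∀ v : V, gdeg G v ≤ 3)
    (hgirth : ∀ (v : V) (c : G.Walk v v), c.IsCycle → 8 ≤ c.length)
    (hG : wsum G ≤ 20 * gamma G)
    (hmin : ∀ T : Finset V, T.Nonempty → T ≠ Finset.univ →
      20 * gamma (G.induce (↑T : Set V)) < wsum (G.induce (↑T : Set V))) :
    ¬ ∃ v u : V, G.Adj v u ∧ gdeg G v = 1 ∧ gdeg G u = 2 := by
  classical
  rintro ⟨v, u, hadj, hv, hu⟩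
  -- degree as a filter cardinality
  have hdg : ∀ w : V, gdeg G w = (univ.filter (fun y => G.Adj w y)).card := by
    intro w
    have e : ↥(G.neighborSet w) ≃ ↥(univ.filter (fun y => G.Adj w y) : Finset V) :=
      ⟨fun z => ⟨z.1, mem_filter.mpr ⟨mem_univ _, z.2⟩⟩, fun y => ⟨y.1, (mem_filter.mp y.2).2⟩,
        fun z => rfl, fun y => rfl⟩
    rw [gdeg, Nat.card_congr e, Nat.card_eq_fintype_card, Fintype.card_coe]
  -- neighbors of v
  have hvn : univ.filter (fun y => G.Adj v y) = {u} := by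
    obtain ⟨a, ha⟩ := Finset.card_eq_one.mp (by rw [← hdg]; exact hv)
    have hum : u ∈ univ.filter (fun y => G.Adj v y) := mem_filter.mpr ⟨mem_univ _, hadj⟩
    rw [ha] at hum ⊢
    rw [mem_singleton.mp hum]
  have hNv : ∀ y, G.Adj v y → y = u := by
    intro y hy
    have : y ∈ univ.filter (fun y => G.Adj v y) := mem_filter.mpr ⟨mem_univ _, hy⟩
    rw [hvn] at this; exact mem_singleton.mp this
  -- the other neighbor of u
  obtain ⟨a, b, hab, hset⟩ := Finset.card_eq_two.mp (show (univ.filter (fun y => G.Adj u y)).card = 2 by rw [← hdg]; exact hu)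
  have hvmem : v ∈ univ.filter (fun y => G.Adj u y) := mem_filter.mpr ⟨mem_univ _, hadj.symm⟩
  obtain ⟨x, hxv, hun⟩ : ∃ x, x ≠ v ∧ univ.filter (fun y => G.Adj u y) = {v, x} := by
    rw [hset] at hvmem
    rcases mem_insert.mp hvmem with h | h
    · exact ⟨b, fun h' => hab (h ▸ h'.symm), by rw [hset, h]⟩
    · have hvb : v = b := mem_singleton.mp h
      subst hvb
      exact ⟨a, fun h' => hab h', by rw [hset, Finset.pair_comm]⟩
  have hux : G.Adj u x := by
    have : x ∈ univ.filter (fun y => G.Adj u y) := by rw [hun]; simp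
    exact (mem_filter.mp this).2
  have hNu : ∀ y, G.Adj u y → y = v ∨ y = x := by
    intro y hy
    have : y ∈ univ.filter (fun y => G.Adj u y) := mem_filter.mpr ⟨mem_univ _, hy⟩
    rw [hun] at this; simpa using this
  have hxu : x ≠ u := fun h => G.irrefl (h ▸ hux)
  have hvu : v ≠ u := G.ne_of_adj hadj
  -- the finset T
  set T : Finset V := univ \ {v, u} with hTdef
  have hT : ∀ w, w ∈ T ↔ w ≠ v ∧ w ≠ u := by
    intro w; simp [hTdef]
  have hxT : x ∈ T := (hT x).mpr ⟨hxv, hxu⟩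
  have hTne : T.Nonempty := ⟨x, hxT⟩
  have hTnu : T ≠ univ := by
    intro h
    have : v ∈ T := h ▸ mem_univ v
    exact ((hT v).mp this).1 rfl
  set S : Set V := (↑T : Set V) with hSdef
  -- degrees in the induced graph
  have hgdegH : ∀ (w : V) (hw : w ∈ S),
      gdeg (G.induce S) ⟨w, hw⟩ = (T.filter (fun y => G.Adj w y)).card := by
    intro w hw
    have e : ↥((G.induce S).neighborSet ⟨w, hw⟩) ≃ ↥(T.filter (fun y => G.Adj w y) : Finset V) :=
      ⟨fun z => ⟨z.1.1, by
          refine mem_filter.mpr ⟨?_, ?_⟩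
          · exact Finset.mem_coe.mp z.1.2
          · exact z.2⟩,
       fun y => ⟨⟨y.1, Finset.mem_coe.mpr (mem_filter.mp y.2).1⟩, (mem_filter.mp y.2).2⟩,
       fun z => rfl, fun y => rfl⟩
    rw [gdeg, Nat.card_congr e, Nat.card_eq_fintype_card, Fintype.card_coe]
  -- unchanged degrees away from x
  have hsame : ∀ (w : V) (hw : w ∈ S), w ≠ x → gdeg (G.induce S) ⟨w, hw⟩ = gdeg G w := by
    intro w hw hwx
    have hwT : w ∈ T := Finset.mem_coe.mp hw
    rw [hgdegH w hw, hdg]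
    congr 1
    ext y
    simp only [mem_filter, mem_univ, true_and]
    constructor
    · rintro ⟨-, h⟩; exact h
    · intro h
      refine ⟨(hT y).mpr ⟨?_, ?_⟩, h⟩
      · rintro rfl
        exact ((hT w).mp hwT).2 (hNv w h.symm)
      · rintro rfl
        rcases hNu w h.symm with rfl | rfl
        · exact ((hT w).mp hwT).1 rfl
        · exact hwx rfl
  -- degree of x drops by one
  have hxS : x ∈ S := Finset.mem_coe.mpr hxT
  have hxdrop : gdeg G x = gdeg (G.induce S) ⟨x, hxS⟩ + 1 := by
    rw [hgdegH x hxS, hdg]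
    have : univ.filter (fun y => G.Adj x y) = insert u (T.filter (fun y => G.Adj x y)) := by
      ext y
      simp only [mem_filter, mem_univ, true_and, mem_insert]
      constructor
      · intro h
        by_cases hyu : y = u
        · exact Or.inl hyu
        · refine Or.inr ⟨(hT y).mpr ⟨?_, hyu⟩, h⟩
          rintro rfl
          exact hxu (hNv x h.symm)
      · rintro (rfl | ⟨-, h⟩)
        · exact hux.symm
        · exact h
    rw [this, Finset.card_insert_of_notMem]
    intro hmem
    exact ((hT u).mp (mem_filter.mp hmem).1).2 rfl
  -- sum splitting
  have huT : u ∉ T := fun h => ((hT u).mp h).2 rfl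
  have hvT : v ∉ insert u T := by
    simp only [mem_insert]
    rintro (h | h)
    · exact hvu h
    · exact ((hT v).mp h).1 rfl
  have hsplit : (univ : Finset V) = insert v (insert u T) := by
    ext w
    simp only [mem_univ, true_iff, mem_insert]
    by_cases h1 : w = v
    · exact Or.inl h1
    by_cases h2 : w = u
    · exact Or.inr (Or.inl h2)
    · exact Or.inr (Or.inr ((hT w).mpr ⟨h1, h2⟩))
  have hwsumG : wsum G = 26 + ∑ w ∈ T, wt (gdeg G w) := by
    rw [wsum, hsplit, Finset.sum_insert hvT, Finset.sum_insert huT, hv, hu]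
    simp [wt]
    omega
  -- bound on wsum H
  have hterm : ∀ z : ↥S, wt (gdeg (G.induce S) z) ≤ wt (gdeg G z.1) + (if z.1 = x then 5 else 0) := by
    intro z
    by_cases hz : z.1 = x
    · have hz2 : z = ⟨x, hxS⟩ := Subtype.ext hz
      rw [hz, if_pos rfl, hz2]
      have hle3 := hdeg x
      rw [hxdrop] at hle3 ⊢
      set d := gdeg (G.induce S) ⟨x, hxS⟩
      have hd : d ≤ 2 := by omega
      interval_cases d <;> simp [wt]
    · rw [if_neg hz, hsame z.1 z.2 hz]
      omega
  have hwsumH : wsum (G.induce S) ≤ (∑ w ∈ T, wt (gdeg G w)) + 5 := by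
    rw [wsum]
    calc ∑ z : ↥S, wt (gdeg (G.induce S) z)
        ≤ ∑ z : ↥S, (wt (gdeg G z.1) + (if z.1 = x then 5 else 0)) :=
          Finset.sum_le_sum (fun z _ => hterm z)
      _ = ∑ w ∈ T, (wt (gdeg G w) + (if w = x then 5 else 0)) := by
          rw [← Finset.sum_coe_sort T (fun w => wt (gdeg G w) + (if w = x then 5 else 0))]
          exact Fintype.sum_equiv (Equiv.subtypeEquivRight (fun y => by simp [hSdef]))
            _ _ (fun z => rfl)
      _ = (∑ w ∈ T, wt (gdeg G w)) + ∑ w ∈ T, (if w = x then 5 else 0) := Finset.sum_add_distrib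
      _ ≤ (∑ w ∈ T, wt (gdeg G w)) + 5 := by
          rw [Finset.sum_ite_eq' T x (fun _ => 5), if_pos hxT]
  -- domination number comparison
  have hexists : ∃ D : Finset ↥S, D.card = gamma (G.induce S) ∧
      ∀ z : ↥S, z ∈ D ∨ ∃ y ∈ D, (G.induce S).Adj y z := by
    have hne : {n | ∃ D : Finset ↥S, D.card = n ∧
        ∀ z : ↥S, z ∈ D ∨ ∃ y ∈ D, (G.induce S).Adj y z}.Nonempty :=
      ⟨(univ : Finset ↥S).card, univ, rfl, fun z => Or.inl (mem_univ z)⟩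
    exact Nat.sInf_mem hne
  obtain ⟨DH, hDHcard, hDHdom⟩ := hexists
  set D : Finset V := insert u (DH.image Subtype.val) with hDdef
  have hdom : ∀ w : V, w ∈ D ∨ ∃ y ∈ D, G.Adj y w := by
    intro w
    by_cases hw1 : w = u
    · exact Or.inl (hw1 ▸ mem_insert_self u _)
    by_cases hw2 : w = v
    · exact Or.inr ⟨u, mem_insert_self u _, hw2 ▸ hadj.symm⟩
    · have hwS : w ∈ S := Finset.mem_coe.mpr ((hT w).mpr ⟨hw2, hw1⟩)
      rcases hDHdom ⟨w, hwS⟩ with h | ⟨y, hy, hyadj⟩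
      · exact Or.inl (mem_insert_of_mem (mem_image_of_mem _ h))
      · exact Or.inr ⟨y.1, mem_insert_of_mem (mem_image_of_mem _ hy), hyadj⟩
  have hgamma : gamma G ≤ gamma (G.induce S) + 1 := by
    have h1 : gamma G ≤ D.card := Nat.sInf_le ⟨D, rfl, hdom⟩
    have h2 : D.card ≤ DH.card + 1 :=
      le_trans (card_insert_le _ _) (Nat.succ_le_succ (card_image_le))
    omega
  have hfinal : 20 * gamma (G.induce S) < wsum (G.induce S) := hmin T hTne hTnu
  omega
end

section
/- Let G be a finite simple graph with maximum degree at most 3 and girth at least 8, such that 20·γ(G) ≥ w(G) and every nonempty proper induced subgraph H of G satisfies 20·γ(H) < w(H). Then G contains no sequence (1,3,1), i.e., there is no path of three distinct vertices v₁, u, v₂ with v₁u and uv₂ edges of G, deg_G(v₁) = 1, deg_G(u) = 3, and deg_G(v₂) = 1. -/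
open Finset

theorem no_seq_1_3_1 {V : Type*} [Fintype V] (G : SimpleGraph V)
    (hdeg : ∀ v : V, gdeg G v ≤ 3)
    (hgirth : ∀ (v : V) (c : G.Walk v v), c.IsCycle → 8 ≤ c.length)
    (hG : wsum G ≤ 20 * gamma G)
    (hmin : ∀ T : Finset V, T.Nonempty → T ≠ Finset.univ →
      20 * gamma (G.induce (↑T : Set V)) < wsum (G.induce (↑T : Set V))) :
    ¬ ∃ v₁ u v₂ : V, v₁ ≠ v₂ ∧ G.Adj v₁ u ∧ G.Adj u v₂ ∧
      gdeg G v₁ = 1 ∧ gdeg G u = 3 ∧ gdeg G v₂ = 1 := by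
  classical
  rintro ⟨v₁, u, v₂, hne, h1, h2, d1, d3, d2⟩
  have nc1 : (G.neighborSet v₁).ncard = 1 := by
    rw [← Nat.card_coe_set_eq]; exact d1
  have nc2 : (G.neighborSet v₂).ncard = 1 := by
    rw [← Nat.card_coe_set_eq]; exact d2
  have nc3 : (G.neighborSet u).ncard = 3 := by
    rw [← Nat.card_coe_set_eq]; exact d3
  -- N(v₁) = {u}, N(v₂) = {u}
  have hN1 : G.neighborSet v₁ = {u} := by
    obtain ⟨a, ha⟩ := Set.ncard_eq_one.mp nc1
    have hu : u ∈ G.neighborSet v₁ := h1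
    rw [ha] at hu ⊢
    simp only [Set.mem_singleton_iff] at hu
    rw [hu]
  have hN2 : G.neighborSet v₂ = {u} := by
    obtain ⟨a, ha⟩ := Set.ncard_eq_one.mp nc2
    have hu : u ∈ G.neighborSet v₂ := h2.symm
    rw [ha] at hu ⊢
    simp only [Set.mem_singleton_iff] at hu
    rw [hu]
  -- third neighbor x of u
  have hnsub : ¬ (G.neighborSet u ⊆ ({v₁, v₂} : Set V)) := by
    intro hs
    have := Set.ncard_le_ncard hs (Set.toFinite _)
    rw [nc3, Set.ncard_pair hne] at this
    omega
  obtain ⟨x, hxN, hxne⟩ := Set.not_subset.mp hnsub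
  have hxadj : G.Adj u x := hxN
  have hx1 : x ≠ v₁ := fun h => hxne (by rw [h]; left; rfl)
  have hx2 : x ≠ v₂ := fun h => hxne (by rw [h]; right; rfl)
  have hxu : x ≠ u := hxadj.ne'
  have hNu : G.neighborSet u = {v₁, v₂, x} := by
    refine (Set.eq_of_subset_of_ncard_le ?_ ?_ (Set.toFinite _)).symm
    · intro z hz
      rcases hz with h | h | h
      · rw [h]; exact h1.symm
      · rw [h]; exact h2
      · rw [Set.mem_singleton_iff] at h; rw [h]; exact hxN
    · rw [nc3]
      rw [Set.ncard_insert_of_notMem, Set.ncard_pair hx2.symm]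
      rintro (h | h)
      · exact hne h
      · exact hx1 h.symm
  have huv1 : u ≠ v₁ := h1.ne'
  have huv2 : u ≠ v₂ := h2.ne
  -- the set T
  set T : Finset V := Finset.univ \ {v₁, u, v₂} with hT
  have hmemT : ∀ v : V, v ∈ T ↔ v ≠ v₁ ∧ v ≠ u ∧ v ≠ v₂ := by
    intro v
    simp [hT, not_or]
  have hxT : x ∈ T := (hmemT x).mpr ⟨hx1, hxu, hx2⟩
  have hTne : T.Nonempty := ⟨x, hxT⟩
  have hTne' : T ≠ Finset.univ := by
    intro h
    have : v₁ ∈ T := h ▸ Finset.mem_univ v₁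
    exact ((hmemT v₁).mp this).1 rfl
  -- neighbors of vertices in T (other than x) stay in T
  have keep : ∀ v w : V, v ∈ T → v ≠ x → G.Adj v w → w ∈ T := by
    intro v w hv hvx hadj
    obtain ⟨hv1, hvu, hv2⟩ := (hmemT v).mp hv
    rw [hmemT]
    refine ⟨?_, ?_, ?_⟩
    · rintro rfl
      have : v ∈ G.neighborSet w := hadj.symm
      rw [hN1] at this
      exact hvu this
    · rintro rfl
      have : v ∈ G.neighborSet w := hadj.symm
      rw [hNu] at this
      rcases this with h | h | h
      · exact hv1 h
      · exact hv2 h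
      · exact hvx h
    · rintro rfl
      have : v ∈ G.neighborSet w := hadj.symm
      rw [hN2] at this
      exact hvu this
  -- neighbors of x other than u stay in T
  have keepx : ∀ w : V, G.Adj x w → w ≠ u → w ∈ T := by
    intro w hadj hwu
    rw [hmemT]
    refine ⟨?_, hwu, ?_⟩
    · rintro rfl
      have : x ∈ G.neighborSet w := hadj.symm
      rw [hN1] at this
      exact hxu this
    · rintro rfl
      have : x ∈ G.neighborSet w := hadj.symm
      rw [hN2] at this
      exact hxu this
  set H := G.induce (↑T : Set V) with hH
  -- degree preservation for v ≠ x
  have hdegeq : ∀ (v : V) (hv : v ∈ (↑T : Set V)), v ≠ x → gdeg H ⟨v, hv⟩ = gdeg G v := by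
    intro v hv hvx
    have hvT : v ∈ T := hv
    apply Nat.card_congr
    exact {
      toFun := fun z => ⟨(↑(↑z : (↑T : Set V)) : V), z.2⟩
      invFun := fun w => ⟨⟨(w : V), keep v w hvT hvx w.2⟩, w.2⟩
      left_inv := fun z => by apply Subtype.ext; apply Subtype.ext; rfl
      right_inv := fun w => rfl }
  -- degree of x drops by exactly one
  have hdegx : gdeg G x = gdeg H ⟨x, hxT⟩ + 1 := by
    have e : H.neighborSet ⟨x, hxT⟩ ≃ ↥(G.neighborSet x \ {u}) :=
      { toFun := fun z => ⟨(↑(↑z : (↑T : Set V)) : V),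
          ⟨z.2, ((hmemT _).mp (by exact_mod_cast ((↑z : (↑T : Set V)).2))).2.1⟩⟩
        invFun := fun w => ⟨⟨(w : V), keepx w w.2.1 w.2.2⟩, w.2.1⟩
        left_inv := fun z => by apply Subtype.ext; apply Subtype.ext; rfl
        right_inv := fun w => rfl }
    have h1' : gdeg H ⟨x, hxT⟩ = (G.neighborSet x \ {u}).ncard := by
      rw [gdeg, Nat.card_congr e, Nat.card_coe_set_eq]
    have h2' : (G.neighborSet x \ {u}).ncard + 1 = (G.neighborSet x).ncard :=
      Set.ncard_diff_singleton_add_one (hxadj.symm) (Set.toFinite _)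
    rw [gdeg, Nat.card_coe_set_eq, ← h2', h1']
  -- sums
  set S := ∑ v ∈ T, wt (gdeg G v) with hS
  have hWG : wsum G = S + 37 := by
    have hsub : ({v₁, u, v₂} : Finset V) ⊆ Finset.univ := Finset.subset_univ _
    have := Finset.sum_sdiff (f := fun v => wt (gdeg G v)) hsub
    rw [wsum, ← this, ← hT, ← hS]
    congr 1
    rw [Finset.sum_insert (by simp [huv1.symm, hne]), Finset.sum_insert (by simp [huv2]),
      Finset.sum_singleton, d1, d3, d2]
    rfl
  have hWH : wsum H ≤ S + 5 := by
    have hterm : ∀ v : (↑T : Set V), wt (gdeg H v) ≤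
        wt (gdeg G ↑v) + (if (v : V) = x then 5 else 0) := by
      rintro ⟨v, hv⟩
      by_cases hvx : v = x
      · subst hvx
        simp only [if_pos rfl]
        have hd3 := hdeg v
        rw [hdegx] at hd3 ⊢
        have : gdeg H ⟨v, hxT⟩ ≤ 2 := by omega
        have heq : (⟨v, hv⟩ : (↑T : Set V)) = ⟨v, hxT⟩ := rfl
        rw [heq]
        interval_cases (gdeg H (⟨v, hxT⟩ : (↑T : Set V))) <;> decide
      · rw [hdegeq v hv hvx, if_neg hvx]
        simp
    calc wsum H = ∑ v : (↑T : Set V), wt (gdeg H v) := rfl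
      _ ≤ ∑ v : (↑T : Set V), (wt (gdeg G ↑v) + (if (v : V) = x then 5 else 0)) :=
          Finset.sum_le_sum (fun v _ => hterm v)
      _ = (∑ v : (↑T : Set V), wt (gdeg G ↑v)) +
          ∑ v : (↑T : Set V), (if (v : V) = x then 5 else 0) := Finset.sum_add_distrib
      _ = S + 5 := by
          rw [Finset.sum_set_coe (f := fun v => wt (gdeg G v)),
            Finset.sum_set_coe (f := fun v => if v = x then 5 else 0)]
          simp only [Finset.toFinset_coe]
          rw [← hS]
          congr 1
          rw [Finset.sum_congr rfl (fun i _ => by congr 1)]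
          simp [hxT]
  -- gamma inequality
  have hgam : gamma G ≤ gamma H + 1 := by
    have hne0 : {n | ∃ D : Finset (↑T : Set V), D.card = n ∧
        ∀ v, v ∈ D ∨ ∃ u ∈ D, H.Adj u v}.Nonempty :=
      ⟨(Finset.univ : Finset (↑T : Set V)).card, Finset.univ, rfl,
        fun v => Or.inl (Finset.mem_univ v)⟩
    obtain ⟨D, hDcard, hDdom⟩ := Nat.sInf_mem hne0
    set D' : Finset V := insert u (D.image Subtype.val) with hD'
    have hdom : ∀ v : V, v ∈ D' ∨ ∃ w ∈ D', G.Adj w v := by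
      intro v
      by_cases hv : v ∈ T
      · rcases hDdom ⟨v, hv⟩ with h | ⟨d, hd, hadj⟩
        · exact Or.inl (Finset.mem_insert_of_mem (Finset.mem_image_of_mem _ h))
        · exact Or.inr ⟨↑d, Finset.mem_insert_of_mem (Finset.mem_image_of_mem _ hd), hadj⟩
      · rw [hmemT] at hv
        push_neg at hv
        by_cases hvv1 : v = v₁
        · exact Or.inr ⟨u, Finset.mem_insert_self u _, hvv1 ▸ h1.symm⟩
        by_cases hvu : v = u
        · exact Or.inl (hvu ▸ Finset.mem_insert_self u _)
        · have hvv2 : v = v₂ := hv hvv1 hvu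
          exact Or.inr ⟨u, Finset.mem_insert_self u _, hvv2 ▸ h2⟩
    have hle1 : gamma G ≤ D'.card := Nat.sInf_le ⟨D', rfl, hdom⟩
    have hle2 : D'.card ≤ D.card + 1 := by
      calc D'.card ≤ (D.image Subtype.val).card + 1 := Finset.card_insert_le _ _
        _ ≤ D.card + 1 := Nat.add_le_add_right (Finset.card_image_le) 1
    have hgH : gamma H = D.card := hDcard.symm
    rw [hgH]
    exact le_trans hle1 hle2
  have hmin' := hmin T hTne hTne'
  rw [← hH] at hmin'
  omega
end

section
/- For every n ≥ 3, the graph H_n has domination number γ(H_n) = 4n. -/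
open Finset

/-- The edges of the graph `G₂`. -/
def g2Edges : List (Fin 10 × Fin 10) :=
  [(0,2), (0,3), (0,4), (1,2), (1,3), (1,4), (2,5), (4,6), (5,7), (5,8),
   (6,7), (6,8), (7,9), (8,9)]

/-- The graph `G₂` on 10 vertices. -/
def G2 : SimpleGraph (Fin 10) :=
  SimpleGraph.fromRel (fun a b => (a, b) ∈ g2Edges)

/-- The graph `H_n`: a cycle on vertices `Sum.inl i` for `i : Fin n`, with a copy of `G₂`
(on vertices `Sum.inr (i, a)`, `a : Fin 10`) attached to each cycle vertex `Sum.inl i`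
via an edge from `Sum.inl i` to the vertex `Sum.inr (i, 3)`. -/
def Hgraph (n : ℕ) : SimpleGraph (Fin n ⊕ Fin n × Fin 10) :=
  SimpleGraph.fromRel (fun x y =>
    match x, y with
    | Sum.inl i, Sum.inl j => (j : ℕ) = ((i : ℕ) + 1) % n
    | Sum.inl i, Sum.inr (j, a) => i = j ∧ a = 3
    | Sum.inr (i, a), Sum.inr (j, b) => i = j ∧ (a, b) ∈ g2Edges
    | _, _ => False)



def uAdjB : Option (Fin 10) → Fin 10 → Bool
  | none, a => a = 3
  | some b, a => decide ((b,a) ∈ g2Edges ∨ (a,b) ∈ g2Edges)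

lemma key3 : ∀ x y z : Option (Fin 10), ∃ a : Fin 10,
    ¬ (some a = x ∨ some a = y ∨ some a = z ∨
       uAdjB x a = true ∨ uAdjB y a = true ∨ uAdjB z a = true) := by decide

lemma keyUnit (T : Finset (Option (Fin 10)))
    (h : ∀ a : Fin 10, some a ∈ T ∨ ∃ b ∈ T, uAdjB b a = true) : 4 ≤ T.card := by
  by_contra hc
  push_neg at hc
  have hlen : T.toList.length ≤ 3 := by
    rw [Finset.length_toList]; omega
  set l := T.toList with hl
  have hmem : ∀ t ∈ T, t = l.getD 0 none ∨ t = l.getD 1 none ∨ t = l.getD 2 none := by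
    intro t ht
    have : t ∈ l := by rw [hl, Finset.mem_toList]; exact ht
    obtain ⟨i, hi, rfl⟩ := List.mem_iff_getElem.mp this
    have hi3 : i < 3 := lt_of_lt_of_le hi hlen
    interval_cases i <;>
      simp [List.getElem?_eq_getElem hi]
  obtain ⟨a, ha⟩ := key3 (l.getD 0 none) (l.getD 1 none) (l.getD 2 none)
  push_neg at ha
  obtain ⟨h1, h2, h3, h4, h5, h6⟩ := ha
  rcases h a with hsome | ⟨b, hb, hadj⟩
  · rcases hmem _ hsome with e | e | e <;> [exact h1 e; exact h2 e; exact h3 e]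
  · rcases hmem _ hb with rfl | rfl | rfl <;> [exact h4 hadj; exact h5 hadj; exact h6 hadj]

/-- Embedding of the abstract unit into the vertices of `H_n`. -/
def emb {n : ℕ} (i : Fin n) : Option (Fin 10) → Fin n ⊕ Fin n × Fin 10
  | none => Sum.inl i
  | some a => Sum.inr (i, a)

lemma emb_inj {n : ℕ} (i : Fin n) : Function.Injective (emb i) := by
  intro o o' h
  cases o <;> cases o' <;> simp [emb] at h ⊢ <;> tauto

lemma adj_inr {n : ℕ} {u : Fin n ⊕ Fin n × Fin 10} {i : Fin n} {a : Fin 10}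
    (h : (Hgraph n).Adj u (Sum.inr (i, a))) :
    ∃ o : Option (Fin 10), u = emb i o ∧ uAdjB o a = true := by
  rw [Hgraph, SimpleGraph.fromRel_adj] at h
  obtain ⟨hne, h | h⟩ := h
  · match u, h with
    | Sum.inl j, h =>
      obtain ⟨rfl, rfl⟩ := h
      exact ⟨none, rfl, by simp [uAdjB]⟩
    | Sum.inr (j, b), h =>
      obtain ⟨rfl, hm⟩ := h
      exact ⟨some b, rfl, by simp [uAdjB, hm]⟩
  · match u, h with
    | Sum.inr (j, b), h =>
      obtain ⟨rfl, hm⟩ := h.imp id (fun x => x)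
      exact ⟨some b, rfl, by simp [uAdjB, h.2]⟩

lemma g2_ne : ∀ p ∈ g2Edges, p.1 ≠ p.2 := by decide

lemma adj_gadget {n : ℕ} (i : Fin n) (b a : Fin 10)
    (h : (b, a) ∈ g2Edges ∨ (a, b) ∈ g2Edges) :
    (Hgraph n).Adj (Sum.inr (i, b)) (Sum.inr (i, a)) := by
  rw [Hgraph, SimpleGraph.fromRel_adj]
  refine ⟨?_, ?_⟩
  · rcases h with h | h
    · simpa using fun hb => (g2_ne _ h) (by simp [hb])
    · simpa using fun hb => (g2_ne _ h) (by simp [hb])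
  · rcases h with h | h
    · exact Or.inl ⟨rfl, h⟩
    · exact Or.inr ⟨rfl, h⟩

lemma adj_attach {n : ℕ} (i : Fin n) :
    (Hgraph n).Adj (Sum.inr (i, 3)) (Sum.inl i) := by
  rw [Hgraph, SimpleGraph.fromRel_adj]
  exact ⟨by simp, Or.inr ⟨rfl, rfl⟩⟩

theorem gamma_Hgraph (n : ℕ) (hn : 3 ≤ n) :
    gamma (Hgraph n) = 4 * n := by
  have hnpos : 0 < n := by omega
  -- the dominating set of size 4n
  set D₀ : Finset (Fin n ⊕ Fin n × Fin 10) :=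
    Finset.univ.biUnion (fun i : Fin n =>
      ({Sum.inr (i,2), Sum.inr (i,3), Sum.inr (i,6), Sum.inr (i,9)} :
        Finset (Fin n ⊕ Fin n × Fin 10))) with hD₀
  have hcard : D₀.card = 4 * n := by
    rw [hD₀, Finset.card_biUnion]
    · simp [Finset.card_insert_of_notMem, mul_comm]
    · intro i _ j _ hij
      simp only [Finset.disjoint_left]
      intro v hv hv'
      simp only [Finset.mem_insert, Finset.mem_singleton] at hv hv'
      rcases hv with rfl|rfl|rfl|rfl <;> rcases hv' with h|h|h|h <;>
        simp_all
  have hdom : ∀ v, v ∈ D₀ ∨ ∃ u ∈ D₀, (Hgraph n).Adj u v := by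
    intro v
    have hmem : ∀ (i : Fin n) (a : Fin 10), a = 2 ∨ a = 3 ∨ a = 6 ∨ a = 9 →
        Sum.inr (i, a) ∈ D₀ := by
      intro i a ha
      rw [hD₀]
      simp only [Finset.mem_biUnion]
      exact ⟨i, Finset.mem_univ i, by rcases ha with rfl|rfl|rfl|rfl <;> simp⟩
    match v with
    | Sum.inl i =>
      exact Or.inr ⟨Sum.inr (i, 3), hmem i 3 (by tauto), adj_attach i⟩
    | Sum.inr (i, a) =>
      by_cases ha : a = 2 ∨ a = 3 ∨ a = 6 ∨ a = 9
      · exact Or.inl (hmem i a ha)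
      · right
        fin_cases a
        · exact ⟨Sum.inr (i, 3), hmem i 3 (by tauto), adj_gadget i 3 0 (by decide)⟩
        · exact ⟨Sum.inr (i, 3), hmem i 3 (by tauto), adj_gadget i 3 1 (by decide)⟩
        · exact absurd (by tauto) ha
        · exact absurd (by tauto) ha
        · exact ⟨Sum.inr (i, 6), hmem i 6 (by tauto), adj_gadget i 6 4 (by decide)⟩
        · exact ⟨Sum.inr (i, 2), hmem i 2 (by tauto), adj_gadget i 2 5 (by decide)⟩
        · exact absurd (by tauto) ha
        · exact ⟨Sum.inr (i, 9), hmem i 9 (by tauto), adj_gadget i 9 7 (by decide)⟩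
        · exact ⟨Sum.inr (i, 9), hmem i 9 (by tauto), adj_gadget i 9 8 (by decide)⟩
        · exact absurd (by tauto) ha
  have hmemS : 4 * n ∈ {m | ∃ D : Finset (Fin n ⊕ Fin n × Fin 10),
      D.card = m ∧ ∀ v, v ∈ D ∨ ∃ u ∈ D, (Hgraph n).Adj u v} := ⟨D₀, hcard, hdom⟩
  -- lower bound
  have hlb : ∀ m ∈ {m | ∃ D : Finset (Fin n ⊕ Fin n × Fin 10),
      D.card = m ∧ ∀ v, v ∈ D ∨ ∃ u ∈ D, (Hgraph n).Adj u v}, 4 * n ≤ m := by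
    rintro m ⟨D, rfl, hdomD⟩
    set T : Fin n → Finset (Option (Fin 10)) :=
      fun i => Finset.univ.filter (fun o => emb i o ∈ D) with hT
    have hT4 : ∀ i, 4 ≤ (T i).card := by
      intro i
      apply keyUnit
      intro a
      rcases hdomD (Sum.inr (i, a)) with hin | ⟨u, hu, hadj⟩
      · left; rw [hT]; simp only [Finset.mem_filter, Finset.mem_univ, true_and]
        exact hin
      · right
        obtain ⟨o, rfl, ho⟩ := adj_inr hadj
        exact ⟨o, by rw [hT]; simpa using hu, ho⟩
    have hsum : ∑ i : Fin n, (T i).card ≤ D.card := by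
      have : ∑ i : Fin n, (T i).card =
          (Finset.univ.biUnion (fun i => (T i).image (emb i))).card := by
        rw [Finset.card_biUnion]
        · refine Finset.sum_congr rfl fun i _ => ?_
          rw [Finset.card_image_of_injective _ (emb_inj i)]
        · intro i _ j _ hij
          simp only [Finset.disjoint_left, Finset.mem_image]
          rintro v ⟨o, _, rfl⟩ ⟨o', _, he⟩
          cases o <;> cases o' <;> simp [emb] at he <;> exact hij (by tauto)
      rw [this]
      apply Finset.card_le_card
      intro v hv
      simp only [Finset.mem_biUnion, Finset.mem_image] at hv
      obtain ⟨i, _, o, ho, rfl⟩ := hv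
      rw [hT] at ho
      simpa using ho
    calc 4 * n = ∑ _i : Fin n, 4 := by simp [mul_comm]
      _ ≤ ∑ i : Fin n, (T i).card := Finset.sum_le_sum fun i _ => hT4 i
      _ ≤ D.card := hsum
  exact le_antisymm (Nat.sInf_le hmemS) (le_csInf ⟨_, hmemS⟩ hlb)
end
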